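/- arXiv:1903.07244 — 2 statements merged into one kernel-verified Lean document; each statement's English description precedes it below -/
import Mathlib

section
/- Let L > 0, D > 0, b₂ > 0, b₁ ∈ ℝ, and let p₀ be a continuous function on [0,L]. Then there exist constants c₀, c₁, C > 0 such that for every twice continuously differentiable function w on [0,L] with w(0) = 0 and every continuous function v on [0,L], one has c₀·Ê(w,v) − C ≤ 𝓔(w,v) ≤ c₁·Ê(w,v) + C, where Ê(w,v) = (1/2)(D‖w''‖² + ‖v‖²) + (b₂/4)‖w'‖⁴ and 𝓔(w,v) = (1/2)(D‖w''‖² + ‖v‖²) + (b₂/4)‖w'‖⁴ − (b₁/2)‖w'‖² − ∫₀^L p₀(x) w(x) dx. -/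
/-!
With `t = ‖w'‖²`, the two energies differ by the lower-order terms `(b₁/2) t + ∫ p₀ w`.
Since `w(0) = 0`, `|w| ≤ ∫ |w'| ≤ (L + t)/2` on `[0, L]`, so these terms are bounded by a
linear function of `t`, which Young's inequality absorbs into `(b₂/8) t² ≤ Ê/2` up to a
constant. Hence `𝓔` lies between `Ê/2 - C` and `3Ê/2 + C`.
-/

open MeasureTheory intervalIntegral Set

lemma mul_le_mul_sq_add_sq_div {ε : ℝ} (hε : 0 < ε) (a s : ℝ) :
    a * s ≤ ε * s ^ 2 + a ^ 2 / (4 * ε) := by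
  have h : 0 ≤ (2 * ε * s - a) ^ 2 / (4 * ε) := by positivity
  have expand : (2 * ε * s - a) ^ 2 / (4 * ε) = ε * s ^ 2 + a ^ 2 / (4 * ε) - a * s := by
    field_simp
    ring
  linarith

lemma abs_sub_le_half_add_integral_deriv_sq {f : ℝ → ℝ} {a b x : ℝ} (hf : ContDiff ℝ 1 f)
    (hx : x ∈ Icc a b) :
    |f x - f a| ≤ (b - a + ∫ u in a..b, deriv f u ^ 2) / 2 := by
  obtain ⟨hax, hxb⟩ := hx
  have hf' : Continuous (deriv f) := hf.continuous_deriv le_rfl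
  have hbound : Continuous fun u => (1 + deriv f u ^ 2) / 2 := by fun_prop
  have ftc : ∫ u in a..x, deriv f u = f x - f a :=
    integral_deriv_eq_sub (fun y _ => hf.differentiable one_ne_zero y)
      (hf'.intervalIntegrable a x)
  calc |f x - f a| = |∫ u in a..x, deriv f u| := by rw [ftc]
    _ ≤ ∫ u in a..x, |deriv f u| := abs_integral_le_integral_abs hax
    _ ≤ ∫ u in a..x, (1 + deriv f u ^ 2) / 2 := by
        refine integral_mono_on hax (hf'.abs.intervalIntegrable a x)
          (hbound.intervalIntegrable a x) fun u _ => ?_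
        nlinarith [sq_nonneg (|deriv f u| - 1), sq_abs (deriv f u)]
    _ ≤ ∫ u in a..b, (1 + deriv f u ^ 2) / 2 :=
        integral_mono_interval le_rfl hax hxb (.of_forall fun u => by positivity)
          (hbound.intervalIntegrable a b)
    _ = (b - a + ∫ u in a..b, deriv f u ^ 2) / 2 := by
        rw [intervalIntegral.integral_div,
          integral_add (g := fun u => deriv f u ^ 2) intervalIntegrable_const
            ((hf'.pow 2).intervalIntegrable a b),
          intervalIntegral.integral_const, smul_eq_mul, mul_one]

lemma exists_abs_lower_order_terms_le {L b₂ : ℝ} (b₁ : ℝ) (hL : 0 ≤ L) (hb₂ : 0 < b₂)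
    {p₀ : ℝ → ℝ} (hp₀ : ContinuousOn p₀ (Icc 0 L)) :
    ∃ C : ℝ, 0 < C ∧ ∀ w : ℝ → ℝ, ContDiff ℝ 1 w → w 0 = 0 →
      |(b₁ / 2) * (∫ x in (0:ℝ)..L, deriv w x ^ 2) + ∫ x in (0:ℝ)..L, p₀ x * w x|
        ≤ (b₂ / 8) * (∫ x in (0:ℝ)..L, deriv w x ^ 2) ^ 2 + C := by
  obtain ⟨M, hM⟩ := isCompact_Icc.exists_bound_of_continuousOn hp₀
  have hM₀ : 0 ≤ M := (norm_nonneg _).trans (hM 0 ⟨le_rfl, hL⟩)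
  set A := |b₁| / 2 + M * L / 2 with hA
  refine ⟨A ^ 2 / (4 * (b₂ / 8)) + M * L ^ 2 / 2 + 1, by positivity, fun w hw hw0 => ?_⟩
  set t := ∫ x in (0:ℝ)..L, deriv w x ^ 2
  have ht : 0 ≤ t := integral_nonneg hL fun x _ => sq_nonneg _
  have hw_bound : ∀ x ∈ Icc 0 L, |w x| ≤ (L + t) / 2 := fun x hx => by
    simpa [hw0] using abs_sub_le_half_add_integral_deriv_sq hw hx
  have hload : |∫ x in (0:ℝ)..L, p₀ x * w x| ≤ M * ((L + t) / 2) * L := by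
    have := norm_integral_le_of_norm_le_const (a := 0) (b := L) (f := fun x => p₀ x * w x)
      fun x hx => by
        have hx' : x ∈ Icc 0 L := Ioc_subset_Icc_self (by simpa [uIoc_of_le hL] using hx)
        rw [norm_mul]
        exact mul_le_mul (hM x hx') (hw_bound x hx') (norm_nonneg _) hM₀
    simpa [abs_of_nonneg hL] using this
  have hb₁ : |(b₁ / 2) * t| = |b₁| / 2 * t := by
    rw [abs_mul, abs_div, abs_two, abs_of_nonneg ht]
  have young := mul_le_mul_sq_add_sq_div (by positivity : 0 < b₂ / 8) A t
  calc _ ≤ |(b₁ / 2) * t| + |∫ x in (0:ℝ)..L, p₀ x * w x| := abs_add_le _ _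
    _ = |b₁| / 2 * t + |∫ x in (0:ℝ)..L, p₀ x * w x| := by rw [hb₁]
    _ ≤ A * t + M * L ^ 2 / 2 := by
        have : M * ((L + t) / 2) * L = M * L / 2 * t + M * L ^ 2 / 2 := by ring
        rw [hA]
        linarith
    _ ≤ _ := by linarith

/-- The full nonlinear beam energy `𝓔` is equivalent (up to additive constants)
to the positive nonlinear energy `Ê`. -/
theorem nonlinear_energy_equivalence (L D b₂ b₁ : ℝ) (hL : 0 < L) (hD : 0 < D)
    (hb₂ : 0 < b₂) (p₀ : ℝ → ℝ) (hp₀ : ContinuousOn p₀ (Set.Icc 0 L)) :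
    ∃ c₀ c₁ C : ℝ, 0 < c₀ ∧ 0 < c₁ ∧ 0 < C ∧
      ∀ w v : ℝ → ℝ, ContDiff ℝ 2 w → w 0 = 0 → ContinuousOn v (Set.Icc 0 L) →
        (c₀ * ((1/2) * (D * (∫ x in (0:ℝ)..L, (deriv (deriv w) x) ^ 2)
                + ∫ x in (0:ℝ)..L, (v x) ^ 2)
              + (b₂/4) * (∫ x in (0:ℝ)..L, (deriv w x) ^ 2) ^ 2) - C
          ≤ (1/2) * (D * (∫ x in (0:ℝ)..L, (deriv (deriv w) x) ^ 2)
                + ∫ x in (0:ℝ)..L, (v x) ^ 2)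
              + (b₂/4) * (∫ x in (0:ℝ)..L, (deriv w x) ^ 2) ^ 2
              - (b₁/2) * (∫ x in (0:ℝ)..L, (deriv w x) ^ 2)
              - ∫ x in (0:ℝ)..L, p₀ x * w x)
        ∧ ((1/2) * (D * (∫ x in (0:ℝ)..L, (deriv (deriv w) x) ^ 2)
                + ∫ x in (0:ℝ)..L, (v x) ^ 2)
              + (b₂/4) * (∫ x in (0:ℝ)..L, (deriv w x) ^ 2) ^ 2
              - (b₁/2) * (∫ x in (0:ℝ)..L, (deriv w x) ^ 2)
              - (∫ x in (0:ℝ)..L, p₀ x * w x)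
          ≤ c₁ * ((1/2) * (D * (∫ x in (0:ℝ)..L, (deriv (deriv w) x) ^ 2)
                + ∫ x in (0:ℝ)..L, (v x) ^ 2)
              + (b₂/4) * (∫ x in (0:ℝ)..L, (deriv w x) ^ 2) ^ 2) + C) := by
  obtain ⟨C, hC, hlower⟩ := exists_abs_lower_order_terms_le b₁ hL.le hb₂ hp₀
  refine ⟨1/2, 3/2, C, by norm_num, by norm_num, hC, fun w v hw hw0 _ => ?_⟩
  have hbend : 0 ≤ D * ∫ x in (0:ℝ)..L, deriv (deriv w) x ^ 2 :=
    mul_nonneg hD.le (integral_nonneg hL.le fun x _ => sq_nonneg _)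
  have hkinetic : 0 ≤ ∫ x in (0:ℝ)..L, v x ^ 2 := integral_nonneg hL.le fun x _ => sq_nonneg _
  have hX := abs_le.mp (hlower w (hw.of_le (by norm_num)) hw0)
  constructor <;> linarith [hX.1, hX.2]
end

section
/- Let L > 0, D > 0, k₀ ≥ 0, k₁ ≥ 0, α ≥ 0, β ≥ 0, U ≥ 0, b₂ > 0, b₁ ∈ ℝ, let p₀ be continuous on [0,L], and let w(t,x) be a smooth real-valued function on [0,∞) × [0,L] satisfying, for all t ≥ 0 and x ∈ [0,L], the nonlinear cantilever equation w_tt − α w_ttxx + D w_xxxx + k₀ w_t − k₁ w_txx + (b₁ − b₂‖w_x(t,·)‖²) w_xx = p₀(x) − β(w_t + U w_x), together with the boundary conditions w(t,0) = w_x(t,0) = 0, w_xx(t,L) = 0 and −α w_ttx(t,L) + D w_xxx(t,L) − k₁ w_tx(t,L) + (b₁ − b₂‖w_x(t,·)‖²) w_x(t,L) = 0 for all t ≥ 0. Define 𝓔_α(t) = (1/2)(D‖w_xx(t,·)‖² + ‖w_t(t,·)‖² + α‖w_tx(t,·)‖²) + (b₂/4)‖w_x(t,·)‖⁴ − (b₁/2)‖w_x(t,·)‖²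 − ∫₀^L p₀(x) w(t,x) dx. Then for all t ≥ 0: 𝓔_α(t) + ∫₀ᵗ [ (k₀+β)‖w_t(τ,·)‖² + k₁‖w_tx(τ,·)‖² ] dτ = 𝓔_α(0) − βU ∫₀ᵗ ∫₀^L w_x(τ,x) w_t(τ,x) dx dτ. -/
open MeasureTheory intervalIntegral

/-- Partial derivative in time of `w(t,x)`. -/
noncomputable def pt (w : ℝ → ℝ → ℝ) : ℝ → ℝ → ℝ := fun t x => deriv (fun s => w s x) t

/-- Partial derivative in space of `w(t,x)`. -/
noncomputable def px (w : ℝ → ℝ → ℝ) : ℝ → ℝ → ℝ := fun t x => deriv (fun y => w t y) x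

section Smooth
variable {w : ℝ → ℝ → ℝ}

lemma hasDerivAt_pt (hw : ContDiff ℝ (⊤ : ℕ∞) (Function.uncurry w)) (t x : ℝ) :
    HasDerivAt (fun s => w s x) (pt w t x) t := by
  have h1 : HasDerivAt (fun s : ℝ => (s, x)) ((1 : ℝ), (0 : ℝ)) t :=
    (hasDerivAt_id t).prodMk (hasDerivAt_const t x)
  have h2 : HasFDerivAt (Function.uncurry w) (fderiv ℝ (Function.uncurry w) (t, x)) (t, x) :=
    ((hw.differentiable (by simp)) (t, x)).hasFDerivAt
  have := h2.comp_hasDerivAt t h1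
  have hd : HasDerivAt (fun s => w s x) (fderiv ℝ (Function.uncurry w) (t, x) (1, 0)) t := this
  simpa [pt, hd.deriv] using hd

lemma pt_eq (hw : ContDiff ℝ (⊤ : ℕ∞) (Function.uncurry w)) (t x : ℝ) :
    pt w t x = fderiv ℝ (Function.uncurry w) (t, x) (1, 0) := by
  have h1 : HasDerivAt (fun s : ℝ => (s, x)) ((1 : ℝ), (0 : ℝ)) t :=
    (hasDerivAt_id t).prodMk (hasDerivAt_const t x)
  have h2 : HasFDerivAt (Function.uncurry w) (fderiv ℝ (Function.uncurry w) (t, x)) (t, x) :=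
    ((hw.differentiable (by simp)) (t, x)).hasFDerivAt
  have hd : HasDerivAt (fun s => w s x) (fderiv ℝ (Function.uncurry w) (t, x) (1, 0)) t := by
    have := h2.comp_hasDerivAt t h1; exact this
  simpa [pt] using hd.deriv

lemma hasDerivAt_px (hw : ContDiff ℝ (⊤ : ℕ∞) (Function.uncurry w)) (t x : ℝ) :
    HasDerivAt (fun y => w t y) (px w t x) x := by
  have h1 : HasDerivAt (fun y : ℝ => (t, y)) ((0 : ℝ), (1 : ℝ)) x :=
    (hasDerivAt_const x t).prodMk (hasDerivAt_id x)
  have h2 : HasFDerivAt (Function.uncurry w) (fderiv ℝ (Function.uncurry w) (t, x)) (t, x) :=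
    ((hw.differentiable (by simp)) (t, x)).hasFDerivAt
  have hd : HasDerivAt (fun y => w t y) (fderiv ℝ (Function.uncurry w) (t, x) (0, 1)) x :=
    h2.comp_hasDerivAt x h1
  simpa [px, hd.deriv] using hd

lemma px_eq (hw : ContDiff ℝ (⊤ : ℕ∞) (Function.uncurry w)) (t x : ℝ) :
    px w t x = fderiv ℝ (Function.uncurry w) (t, x) (0, 1) := by
  have h1 : HasDerivAt (fun y : ℝ => (t, y)) ((0 : ℝ), (1 : ℝ)) x :=
    (hasDerivAt_const x t).prodMk (hasDerivAt_id x)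
  have h2 : HasFDerivAt (Function.uncurry w) (fderiv ℝ (Function.uncurry w) (t, x)) (t, x) :=
    ((hw.differentiable (by simp)) (t, x)).hasFDerivAt
  have hd : HasDerivAt (fun y => w t y) (fderiv ℝ (Function.uncurry w) (t, x) (0, 1)) x :=
    h2.comp_hasDerivAt x h1
  simpa [px] using hd.deriv

lemma contDiff_fderiv_apply (hw : ContDiff ℝ (⊤ : ℕ∞) (Function.uncurry w)) (v : ℝ × ℝ) :
    ContDiff ℝ (⊤ : ℕ∞) (fun p : ℝ × ℝ => fderiv ℝ (Function.uncurry w) p v) :=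
  (hw.fderiv_right (by simp)).clm_apply contDiff_const

lemma contDiff_pt (hw : ContDiff ℝ (⊤ : ℕ∞) (Function.uncurry w)) :
    ContDiff ℝ (⊤ : ℕ∞) (Function.uncurry (pt w)) := by
  have : Function.uncurry (pt w) = fun p : ℝ × ℝ => fderiv ℝ (Function.uncurry w) p (1, 0) := by
    funext p
    exact pt_eq hw p.1 p.2
  rw [this]
  exact contDiff_fderiv_apply hw _

lemma contDiff_px (hw : ContDiff ℝ (⊤ : ℕ∞) (Function.uncurry w)) :
    ContDiff ℝ (⊤ : ℕ∞) (Function.uncurry (px w)) := by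
  have : Function.uncurry (px w) = fun p : ℝ × ℝ => fderiv ℝ (Function.uncurry w) p (0, 1) := by
    funext p
    exact px_eq hw p.1 p.2
  rw [this]
  exact contDiff_fderiv_apply hw _

lemma clairaut (hw : ContDiff ℝ (⊤ : ℕ∞) (Function.uncurry w)) : px (pt w) = pt (px w) := by
  funext t x
  set F := Function.uncurry w with hF
  set G := fun p : ℝ × ℝ => fderiv ℝ F p with hG
  have hG1 : ContDiff ℝ (⊤ : ℕ∞) G := hw.fderiv_right (by simp)
  have hGd : HasFDerivAt G (fderiv ℝ G (t, x)) (t, x) :=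
    ((hG1.differentiable (by simp)) (t, x)).hasFDerivAt
  have hsym : ∀ u v : ℝ × ℝ, fderiv ℝ G (t, x) u v = fderiv ℝ G (t, x) v u := by
    intro u v
    exact second_derivative_symmetric
      (fun y => ((hw.differentiable (by simp)) y).hasFDerivAt) hGd u v
  -- px (pt w) t x
  have e1 : px (pt w) t x = fderiv ℝ G (t, x) (0, 1) (1, 0) := by
    have huc : Function.uncurry (pt w) = fun p : ℝ × ℝ => G p (1, 0) := by
      funext p; exact pt_eq hw p.1 p.2
    have h1 : HasDerivAt (fun y : ℝ => (t, y)) ((0 : ℝ), (1 : ℝ)) x :=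
      (hasDerivAt_const x t).prodMk (hasDerivAt_id x)
    have h2 : HasFDerivAt (fun p : ℝ × ℝ => G p (1, 0))
        ((fderiv ℝ G (t, x)).flip (1, 0)) (t, x) := by
      have := hGd.clm_apply (hasFDerivAt_const ((1 : ℝ), (0 : ℝ)) ((t, x) : ℝ × ℝ))
      simpa using this
    have hd : HasDerivAt (fun y => G (t, y) (1, 0))
        (fderiv ℝ G (t, x) (0, 1) (1, 0)) x := by
      have := h2.comp_hasDerivAt x h1
      exact this
    have : px (pt w) t x = deriv (fun y => pt w t y) x := rfl
    rw [this]
    have heq : (fun y => pt w t y) = fun y => G (t, y) (1, 0) := by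
      funext y; exact pt_eq hw t y
    rw [heq, hd.deriv]
  have e2 : pt (px w) t x = fderiv ℝ G (t, x) (1, 0) (0, 1) := by
    have h1 : HasDerivAt (fun s : ℝ => (s, x)) ((1 : ℝ), (0 : ℝ)) t :=
      (hasDerivAt_id t).prodMk (hasDerivAt_const t x)
    have h2 : HasFDerivAt (fun p : ℝ × ℝ => G p (0, 1))
        ((fderiv ℝ G (t, x)).flip (0, 1)) (t, x) := by
      have := hGd.clm_apply (hasFDerivAt_const ((0 : ℝ), (1 : ℝ)) ((t, x) : ℝ × ℝ))
      simpa using this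
    have hd : HasDerivAt (fun s => G (s, x) (0, 1))
        (fderiv ℝ G (t, x) (1, 0) (0, 1)) t := by
      have := h2.comp_hasDerivAt t h1
      exact this
    have : pt (px w) t x = deriv (fun s => px w s x) t := rfl
    rw [this]
    have heq : (fun s => px w s x) = fun s => G (s, x) (0, 1) := by
      funext s; exact px_eq hw s x
    rw [heq, hd.deriv]
  rw [e1, e2, hsym]

end Smooth

section Param
open Metric

lemma hasDerivAt_param {a b : ℝ} {c : ℝ → ℝ} (hc : ContinuousOn c (Set.uIcc a b))
    {g : ℝ → ℝ → ℝ} (hg : ContDiff ℝ (⊤ : ℕ∞) (Function.uncurry g)) (t₀ : ℝ) :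
    HasDerivAt (fun t => ∫ x in a..b, c x * g t x)
      (∫ x in a..b, c x * pt g t₀ x) t₀ := by
  have hgc : Continuous (Function.uncurry g) := hg.continuous
  have hptc : Continuous (Function.uncurry (pt g)) := (contDiff_pt hg).continuous
  -- bound on the compact set
  obtain ⟨M, hM⟩ : ∃ M, ∀ p ∈ (closedBall t₀ 1) ×ˢ (Set.uIcc a b),
      ‖Function.uncurry (pt g) p‖ ≤ M := by
    have hK : IsCompact ((closedBall t₀ 1) ×ˢ (Set.uIcc a b)) :=
      (isCompact_closedBall t₀ 1).prod isCompact_uIcc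
    exact hK.exists_bound_of_continuousOn hptc.continuousOn
  have key := intervalIntegral.hasDerivAt_integral_of_dominated_loc_of_deriv_le
    (F := fun t x => c x * g t x) (F' := fun t x => c x * pt g t x) (x₀ := t₀)
    (a := a) (b := b) (μ := volume) (bound := fun x => |c x| * M)
    (s := ball t₀ 1) (ball_mem_nhds t₀ one_pos)
    (Filter.Eventually.of_forall (fun t => by
      apply ContinuousOn.aestronglyMeasurable _ measurableSet_uIoc
      exact (hc.mono Set.uIoc_subset_uIcc).mul
        ((hgc.comp (Continuous.prodMk_right t)).continuousOn)))
    ((hc.mul ((hgc.comp (Continuous.prodMk_right t₀)).continuousOn)).intervalIntegrable)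
    (by
      apply ContinuousOn.aestronglyMeasurable _ measurableSet_uIoc
      exact (hc.mono Set.uIoc_subset_uIcc).mul
        ((hptc.comp (Continuous.prodMk_right t₀)).continuousOn))
    (Filter.Eventually.of_forall (fun x hx t ht => by
      have hxm : x ∈ Set.uIcc a b := Set.uIoc_subset_uIcc hx
      have : ‖pt g t x‖ ≤ M := hM (t, x) ⟨ball_subset_closedBall ht, hxm⟩
      calc ‖c x * pt g t x‖ = |c x| * ‖pt g t x‖ := by
            simp [abs_mul]
        _ ≤ |c x| * M := mul_le_mul_of_nonneg_left this (abs_nonneg _)))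
    (((hc.abs.mul continuousOn_const)).intervalIntegrable)
    (Filter.Eventually.of_forall (fun x _ t _ =>
      (hasDerivAt_pt hg t x).const_mul (c x)))
  exact key.2

lemma hasDerivAt_param' {a b : ℝ} {g : ℝ → ℝ → ℝ}
    (hg : ContDiff ℝ (⊤ : ℕ∞) (Function.uncurry g)) (t₀ : ℝ) :
    HasDerivAt (fun t => ∫ x in a..b, g t x) (∫ x in a..b, pt g t₀ x) t₀ := by
  have := hasDerivAt_param (a := a) (b := b) (c := fun _ => 1)
    continuousOn_const hg t₀
  simpa using this

end Param

lemma hasDerivAt_int_sq {a b : ℝ} {g : ℝ → ℝ → ℝ}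
    (hg : ContDiff ℝ (⊤ : ℕ∞) (Function.uncurry g)) (t₀ : ℝ) :
    HasDerivAt (fun t => ∫ x in a..b, (g t x) ^ 2)
      (2 * ∫ x in a..b, g t₀ x * pt g t₀ x) t₀ := by
  have hg2 : ContDiff ℝ (⊤ : ℕ∞) (Function.uncurry (fun t x => g t x ^ 2)) := hg.pow 2
  have h := hasDerivAt_param' (a := a) (b := b) hg2 t₀
  have h2 : (∫ x in a..b, pt (fun t y => g t y ^ 2) t₀ x)
      = 2 * ∫ x in a..b, g t₀ x * pt g t₀ x := by
    rw [← intervalIntegral.integral_const_mul]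
    apply intervalIntegral.integral_congr
    intro x _
    have hd := (hasDerivAt_pt hg t₀ x).fun_pow 2
    have he : pt (fun t y => g t y ^ 2) t₀ x = deriv (fun s => g s x ^ 2) t₀ := rfl
    rw [he, hd.deriv]
    ring
  rw [h2] at h
  exact h

lemma deriv_zero_on_Ici {f : ℝ → ℝ} {d t : ℝ} (hf : HasDerivAt f d t) (ht : 0 ≤ t)
    (h0 : ∀ s, 0 ≤ s → f s = 0) : d = 0 := by
  have h1 : HasDerivWithinAt f d (Set.Ici 0) t := hf.hasDerivWithinAt
  have h2 : HasDerivWithinAt f 0 (Set.Ici 0) t :=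
    (hasDerivWithinAt_const t _ (0:ℝ)).congr (fun s hs => h0 s hs) (h0 t ht)
  have hu : UniqueDiffWithinAt ℝ (Set.Ici (0:ℝ)) t := uniqueDiffOn_Ici 0 t ht
  rw [← h1.derivWithin hu, h2.derivWithin hu]

lemma ftc_cont {h : ℝ → ℝ} (hc : Continuous h) (t : ℝ) :
    HasDerivAt (fun u => ∫ τ in (0:ℝ)..u, h τ) (h t) t :=
  intervalIntegral.integral_hasDerivAt_right (hc.intervalIntegrable 0 t)
    (hc.stronglyMeasurableAtFilter _ _) hc.continuousAt

/-- Energy identity for the nonlinear extensible clamped–free (cantilever)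
piston-theoretic beam with rotational inertia `α`, square-root damping `k₁`, and
the nonlinear, nonlocal free-end boundary condition. -/
theorem cantilever_nonlinear_energy_identity (L D k₀ k₁ α β U b₂ b₁ : ℝ)
    (hL : 0 < L) (hD : 0 < D) (hk₀ : 0 ≤ k₀) (hk₁ : 0 ≤ k₁) (hα : 0 ≤ α)
    (hβ : 0 ≤ β) (hU : 0 ≤ U) (hb₂ : 0 < b₂)
    (p₀ : ℝ → ℝ) (hp₀ : ContinuousOn p₀ (Set.Icc 0 L))
    (w : ℝ → ℝ → ℝ) (hw : ContDiff ℝ (⊤ : ℕ∞) (Function.uncurry w))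
    (heq : ∀ t ≥ (0:ℝ), ∀ x ∈ Set.Icc (0:ℝ) L,
      pt (pt w) t x - α * px (px (pt (pt w))) t x + D * px (px (px (px w))) t x
          + k₀ * pt w t x - k₁ * px (px (pt w)) t x
          + (b₁ - b₂ * ∫ y in (0:ℝ)..L, (px w t y) ^ 2) * px (px w) t x
        = p₀ x - β * (pt w t x + U * px w t x))
    (hbc : ∀ t ≥ (0:ℝ), w t 0 = 0 ∧ px w t 0 = 0 ∧ px (px w) t L = 0 ∧
      -α * px (pt (pt w)) t L + D * px (px (px w)) t L - k₁ * px (pt w) t L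
        + (b₁ - b₂ * ∫ y in (0:ℝ)..L, (px w t y) ^ 2) * px w t L = 0)
    (En : ℝ → ℝ)
    (hEn : ∀ t, En t = (1/2) * (D * (∫ x in (0:ℝ)..L, (px (px w) t x) ^ 2)
        + (∫ x in (0:ℝ)..L, (pt w t x) ^ 2)
        + α * ∫ x in (0:ℝ)..L, (px (pt w) t x) ^ 2)
        + (b₂/4) * (∫ x in (0:ℝ)..L, (px w t x) ^ 2) ^ 2
        - (b₁/2) * (∫ x in (0:ℝ)..L, (px w t x) ^ 2)
        - ∫ x in (0:ℝ)..L, p₀ x * w t x) :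
    ∀ t ≥ (0:ℝ),
      En t + (∫ τ in (0:ℝ)..t,
          ((k₀ + β) * (∫ x in (0:ℝ)..L, (pt w τ x) ^ 2)
            + k₁ * ∫ x in (0:ℝ)..L, (px (pt w) τ x) ^ 2))
        = En 0 - β * U * ∫ τ in (0:ℝ)..t, ∫ x in (0:ℝ)..L, px w τ x * pt w τ x := by
  intro t ht
  have hw1 : ContDiff ℝ (⊤ : ℕ∞) (Function.uncurry (pt w)) := contDiff_pt hw
  have hw2 : ContDiff ℝ (⊤ : ℕ∞) (Function.uncurry (px w)) := contDiff_px hw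
  have hwxx : ContDiff ℝ (⊤ : ℕ∞) (Function.uncurry (px (px w))) := contDiff_px hw2
  have hwxt : ContDiff ℝ (⊤ : ℕ∞) (Function.uncurry (px (pt w))) := contDiff_px hw1
  have hwtt : ContDiff ℝ (⊤ : ℕ∞) (Function.uncurry (pt (pt w))) := contDiff_pt hw1
  have hwxtt : ContDiff ℝ (⊤ : ℕ∞) (Function.uncurry (px (pt (pt w)))) := contDiff_px hwtt
  have hwxxt : ContDiff ℝ (⊤ : ℕ∞) (Function.uncurry (px (px (pt w)))) := contDiff_px hwxt
  have hwxxx : ContDiff ℝ (⊤ : ℕ∞) (Function.uncurry (px (px (px w)))) := contDiff_px hwxx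
  have hwxxtt : ContDiff ℝ (⊤ : ℕ∞) (Function.uncurry (px (px (pt (pt w))))) := contDiff_px hwxtt
  have hwxxxx : ContDiff ℝ (⊤ : ℕ∞) (Function.uncurry (px (px (px (px w))))) := contDiff_px hwxxx
  have E1 : px (pt w) = pt (px w) := clairaut hw
  have E3 : px (pt (pt w)) = pt (px (pt w)) := clairaut hw1
  have E2 : px (px (pt w)) = pt (px (px w)) := by rw [E1]; exact clairaut hw2
  have huIcc : Set.uIcc (0:ℝ) L = Set.Icc 0 L := Set.uIcc_of_le hL.le
  have hp₀' : ContinuousOn p₀ (Set.uIcc 0 L) := huIcc ▸ hp₀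
  -- continuity of the damping and cross integrands in time
  have hQc : Continuous (fun τ => (k₀ + β) * (∫ x in (0:ℝ)..L, (pt w τ x) ^ 2)
      + k₁ * ∫ x in (0:ℝ)..L, (px (pt w) τ x) ^ 2) := by
    have h1 : Continuous (fun τ => ∫ x in (0:ℝ)..L, (pt w τ x) ^ 2) :=
      continuous_parametric_intervalIntegral_of_continuous'
        (f := fun τ x => (pt w τ x) ^ 2) (hw1.continuous.fun_pow 2) 0 L
    have h2 : Continuous (fun τ => ∫ x in (0:ℝ)..L, (px (pt w) τ x) ^ 2) :=
      continuous_parametric_intervalIntegral_of_continuous'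
        (f := fun τ x => (px (pt w) τ x) ^ 2) (hwxt.continuous.fun_pow 2) 0 L
    exact (continuous_const.mul h1).add (continuous_const.mul h2)
  have hCRc : Continuous (fun τ => ∫ x in (0:ℝ)..L, px w τ x * pt w τ x) :=
    continuous_parametric_intervalIntegral_of_continuous'
      (f := fun τ x => px w τ x * pt w τ x) (hw2.continuous.mul hw1.continuous) 0 L
  -- the master function and its derivative
  have hVal : ∀ τ : ℝ, HasDerivAt
      (fun u => En u + (∫ s in (0:ℝ)..u,
          ((k₀ + β) * (∫ x in (0:ℝ)..L, (pt w s x) ^ 2)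
            + k₁ * ∫ x in (0:ℝ)..L, (px (pt w) s x) ^ 2))
        + β * U * (∫ s in (0:ℝ)..u, ∫ x in (0:ℝ)..L, px w s x * pt w s x))
      (D * (∫ x in (0:ℝ)..L, px (px w) τ x * pt (px (px w)) τ x)
        + (∫ x in (0:ℝ)..L, pt w τ x * pt (pt w) τ x)
        + α * (∫ x in (0:ℝ)..L, px (pt w) τ x * pt (px (pt w)) τ x)
        + (b₂ * (∫ x in (0:ℝ)..L, (px w τ x) ^ 2) - b₁)
            * (∫ x in (0:ℝ)..L, px w τ x * pt (px w) τ x)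
        - (∫ x in (0:ℝ)..L, p₀ x * pt w τ x)
        + ((k₀ + β) * (∫ x in (0:ℝ)..L, (pt w τ x) ^ 2)
            + k₁ * ∫ x in (0:ℝ)..L, (px (pt w) τ x) ^ 2)
        + β * U * (∫ x in (0:ℝ)..L, px w τ x * pt w τ x)) τ := by
    intro τ
    have hA := hasDerivAt_int_sq (a := (0:ℝ)) (b := L) hwxx τ
    have hB := hasDerivAt_int_sq (a := (0:ℝ)) (b := L) hw1 τ
    have hC := hasDerivAt_int_sq (a := (0:ℝ)) (b := L) hwxt τ
    have hS := hasDerivAt_int_sq (a := (0:ℝ)) (b := L) hw2 τ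
    have hP := hasDerivAt_param (a := (0:ℝ)) (b := L) hp₀' hw τ
    have hEnfun : En = fun u => (1/2) * (D * (∫ x in (0:ℝ)..L, (px (px w) u x) ^ 2)
        + (∫ x in (0:ℝ)..L, (pt w u x) ^ 2)
        + α * ∫ x in (0:ℝ)..L, (px (pt w) u x) ^ 2)
        + (b₂/4) * (∫ x in (0:ℝ)..L, (px w u x) ^ 2) ^ 2
        - (b₁/2) * (∫ x in (0:ℝ)..L, (px w u x) ^ 2)
        - ∫ x in (0:ℝ)..L, p₀ x * w u x := funext hEn
    rw [hEnfun]
    have combo := (((((((hA.const_mul D).add hB).add (hC.const_mul α)).const_mul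
        ((1:ℝ)/2)).add ((hS.fun_pow 2).const_mul (b₂/4))).sub (hS.const_mul (b₁/2))).sub hP).add
        (ftc_cont hQc τ) |>.add ((ftc_cont hCRc τ).const_mul (β*U))
    refine combo.congr_deriv ?_
    norm_num
    ring
  -- the derivative vanishes for τ ≥ 0
  have hVal0 : ∀ τ, 0 ≤ τ →
      (D * (∫ x in (0:ℝ)..L, px (px w) τ x * pt (px (px w)) τ x)
        + (∫ x in (0:ℝ)..L, pt w τ x * pt (pt w) τ x)
        + α * (∫ x in (0:ℝ)..L, px (pt w) τ x * pt (px (pt w)) τ x)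
        + (b₂ * (∫ x in (0:ℝ)..L, (px w τ x) ^ 2) - b₁)
            * (∫ x in (0:ℝ)..L, px w τ x * pt (px w) τ x)
        - (∫ x in (0:ℝ)..L, p₀ x * pt w τ x)
        + ((k₀ + β) * (∫ x in (0:ℝ)..L, (pt w τ x) ^ 2)
            + k₁ * ∫ x in (0:ℝ)..L, (px (pt w) τ x) ^ 2)
        + β * U * (∫ x in (0:ℝ)..L, px w τ x * pt w τ x)) = 0 := by
    intro τ hτ
    obtain ⟨hb1, hb2, hb3, hb4⟩ := hbc τ hτ
    have d1 : pt w τ 0 = 0 :=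
      deriv_zero_on_Ici (hasDerivAt_pt hw τ 0) hτ (fun s hs => (hbc s hs).1)
    have d2 : pt (px w) τ 0 = 0 :=
      deriv_zero_on_Ici (hasDerivAt_pt hw2 τ 0) hτ (fun s hs => (hbc s hs).2.1)
    have d2' : px (pt w) τ 0 = 0 := by rw [E1]; exact d2
    have cts : ∀ {g : ℝ → ℝ → ℝ}, ContDiff ℝ (⊤ : ℕ∞) (Function.uncurry g) →
        Continuous (fun x => g τ x) := fun hg => hg.continuous.comp (Continuous.prodMk_right τ)
    -- integration by parts
    have J1 := intervalIntegral.integral_mul_deriv_eq_deriv_mul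
      (u := fun x => pt w τ x) (u' := fun x => px (pt w) τ x)
      (v := fun x => px (pt (pt w)) τ x) (v' := fun x => px (px (pt (pt w))) τ x)
      (a := (0:ℝ)) (b := L)
      (fun x _ => hasDerivAt_px hw1 τ x) (fun x _ => hasDerivAt_px hwxtt τ x)
      (((cts hwxt)).intervalIntegrable 0 L) (((cts hwxxtt)).intervalIntegrable 0 L)
    have J2a := intervalIntegral.integral_mul_deriv_eq_deriv_mul
      (u := fun x => pt w τ x) (u' := fun x => px (pt w) τ x)
      (v := fun x => px (px (px w)) τ x) (v' := fun x => px (px (px (px w))) τ x)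
      (a := (0:ℝ)) (b := L)
      (fun x _ => hasDerivAt_px hw1 τ x) (fun x _ => hasDerivAt_px hwxxx τ x)
      (((cts hwxt)).intervalIntegrable 0 L) (((cts hwxxxx)).intervalIntegrable 0 L)
    have J2b := intervalIntegral.integral_mul_deriv_eq_deriv_mul
      (u := fun x => px (pt w) τ x) (u' := fun x => px (px (pt w)) τ x)
      (v := fun x => px (px w) τ x) (v' := fun x => px (px (px w)) τ x)
      (a := (0:ℝ)) (b := L)
      (fun x _ => hasDerivAt_px hwxt τ x) (fun x _ => hasDerivAt_px hwxx τ x)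
      (((cts hwxxt)).intervalIntegrable 0 L) (((cts hwxxx)).intervalIntegrable 0 L)
    have J3 := intervalIntegral.integral_mul_deriv_eq_deriv_mul
      (u := fun x => pt w τ x) (u' := fun x => px (pt w) τ x)
      (v := fun x => px (pt w) τ x) (v' := fun x => px (px (pt w)) τ x)
      (a := (0:ℝ)) (b := L)
      (fun x _ => hasDerivAt_px hw1 τ x) (fun x _ => hasDerivAt_px hwxt τ x)
      (((cts hwxt)).intervalIntegrable 0 L) (((cts hwxxt)).intervalIntegrable 0 L)
    have J4 := intervalIntegral.integral_mul_deriv_eq_deriv_mul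
      (u := fun x => pt w τ x) (u' := fun x => px (pt w) τ x)
      (v := fun x => px w τ x) (v' := fun x => px (px w) τ x)
      (a := (0:ℝ)) (b := L)
      (fun x _ => hasDerivAt_px hw1 τ x) (fun x _ => hasDerivAt_px hw2 τ x)
      (((cts hwxt)).intervalIntegrable 0 L) (((cts hwxx)).intervalIntegrable 0 L)
    -- clean up boundary terms
    simp only [d1, d2', hb3, zero_mul, mul_zero, sub_zero, zero_sub] at J1 J2a J2b J3 J4
    -- convert the remaining integrals to canonical form
    have cIC : (∫ x in (0:ℝ)..L, px (pt w) τ x * px (pt (pt w)) τ x)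
        = ∫ x in (0:ℝ)..L, px (pt w) τ x * pt (px (pt w)) τ x :=
      intervalIntegral.integral_congr (fun x _ => by rw [E3])
    have cIA : (∫ x in (0:ℝ)..L, px (px (pt w)) τ x * px (px w) τ x)
        = ∫ x in (0:ℝ)..L, px (px w) τ x * pt (px (px w)) τ x :=
      intervalIntegral.integral_congr (fun x _ => by rw [E2]; ring)
    have c3 : (∫ x in (0:ℝ)..L, px (pt w) τ x * px (pt w) τ x)
        = ∫ x in (0:ℝ)..L, (px (pt w) τ x) ^ 2 :=
      intervalIntegral.integral_congr (fun x _ => by ring)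
    have c4 : (∫ x in (0:ℝ)..L, px (pt w) τ x * px w τ x)
        = ∫ x in (0:ℝ)..L, px w τ x * pt (px w) τ x :=
      intervalIntegral.integral_congr (fun x _ => by rw [E1]; ring)
    rw [cIC] at J1
    rw [cIA] at J2b
    rw [c3] at J3
    rw [c4] at J4
    rw [J2b] at J2a
    -- the PDE multiplied by w_t and integrated
    have i1 : IntervalIntegrable (fun x => α * (pt w τ x * px (px (pt (pt w))) τ x))
        volume 0 L :=
      (continuous_const.mul ((cts hw1).mul (cts hwxxtt))).intervalIntegrable 0 L
    have i2 : IntervalIntegrable (fun x => D * (pt w τ x * px (px (px (px w))) τ x))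
        volume 0 L :=
      (continuous_const.mul ((cts hw1).mul (cts hwxxxx))).intervalIntegrable 0 L
    have i3 : IntervalIntegrable (fun x => k₀ * (pt w τ x) ^ 2) volume 0 L :=
      (continuous_const.mul ((cts hw1).pow 2)).intervalIntegrable 0 L
    have i4 : IntervalIntegrable (fun x => k₁ * (pt w τ x * px (px (pt w)) τ x))
        volume 0 L :=
      (continuous_const.mul ((cts hw1).mul (cts hwxxt))).intervalIntegrable 0 L
    have i5 : IntervalIntegrable (fun x =>
        (b₁ - b₂ * ∫ y in (0:ℝ)..L, (px w τ y) ^ 2) * (pt w τ x * px (px w) τ x))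
        volume 0 L :=
      (continuous_const.mul ((cts hw1).mul (cts hwxx))).intervalIntegrable 0 L
    have i6 : IntervalIntegrable (fun x => p₀ x * pt w τ x) volume 0 L :=
      (hp₀'.mul ((cts hw1).continuousOn)).intervalIntegrable
    have i7 : IntervalIntegrable (fun x => β * (pt w τ x) ^ 2) volume 0 L :=
      (continuous_const.mul ((cts hw1).pow 2)).intervalIntegrable 0 L
    have i8 : IntervalIntegrable (fun x => β * U * (px w τ x * pt w τ x)) volume 0 L :=
      (continuous_const.mul ((cts hw2).mul (cts hw1))).intervalIntegrable 0 L
    have hPDE : (∫ x in (0:ℝ)..L, pt w τ x * pt (pt w) τ x)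
        = α * (∫ x in (0:ℝ)..L, pt w τ x * px (px (pt (pt w))) τ x)
          - D * (∫ x in (0:ℝ)..L, pt w τ x * px (px (px (px w))) τ x)
          - k₀ * (∫ x in (0:ℝ)..L, (pt w τ x) ^ 2)
          + k₁ * (∫ x in (0:ℝ)..L, pt w τ x * px (px (pt w)) τ x)
          - (b₁ - b₂ * ∫ y in (0:ℝ)..L, (px w τ y) ^ 2)
              * (∫ x in (0:ℝ)..L, pt w τ x * px (px w) τ x)
          + (∫ x in (0:ℝ)..L, p₀ x * pt w τ x)
          - β * (∫ x in (0:ℝ)..L, (pt w τ x) ^ 2)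
          - β * U * (∫ x in (0:ℝ)..L, px w τ x * pt w τ x) := by
      rw [← intervalIntegral.integral_const_mul α (fun x => pt w τ x * px (px (pt (pt w))) τ x),
        ← intervalIntegral.integral_const_mul D (fun x => pt w τ x * px (px (px (px w))) τ x),
        ← intervalIntegral.integral_const_mul k₀ (fun x => (pt w τ x) ^ 2),
        ← intervalIntegral.integral_const_mul k₁ (fun x => pt w τ x * px (px (pt w)) τ x),
        ← intervalIntegral.integral_const_mul
          (b₁ - b₂ * ∫ y in (0:ℝ)..L, (px w τ y) ^ 2) (fun x => pt w τ x * px (px w) τ x),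
        ← intervalIntegral.integral_const_mul β (fun x => (pt w τ x) ^ 2),
        ← intervalIntegral.integral_const_mul (β * U) (fun x => px w τ x * pt w τ x)]
      rw [← intervalIntegral.integral_sub i1 i2,
        ← intervalIntegral.integral_sub (i1.sub i2) i3,
        ← intervalIntegral.integral_add ((i1.sub i2).sub i3) i4,
        ← intervalIntegral.integral_sub (((i1.sub i2).sub i3).add i4) i5,
        ← intervalIntegral.integral_add ((((i1.sub i2).sub i3).add i4).sub i5) i6,
        ← intervalIntegral.integral_sub (((((i1.sub i2).sub i3).add i4).sub i5).add i6) i7,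
        ← intervalIntegral.integral_sub
          ((((((i1.sub i2).sub i3).add i4).sub i5).add i6).sub i7) i8]
      apply intervalIntegral.integral_congr
      intro x hx
      have h := heq τ hτ x (huIcc ▸ hx)
      linear_combination (pt w τ x) * h
    rw [J1, J2a, J3, J4] at hPDE
    linear_combination hPDE - (pt w τ L) * hb4
  -- conclude by constancy
  have hder0 : ∀ τ ∈ Set.Ico (0:ℝ) t, HasDerivWithinAt
      (fun u => En u + (∫ s in (0:ℝ)..u,
          ((k₀ + β) * (∫ x in (0:ℝ)..L, (pt w s x) ^ 2)
            + k₁ * ∫ x in (0:ℝ)..L, (px (pt w) s x) ^ 2))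
        + β * U * (∫ s in (0:ℝ)..u, ∫ x in (0:ℝ)..L, px w s x * pt w s x))
      0 (Set.Ici τ) τ := by
    intro τ hτ
    have := (hVal τ).hasDerivWithinAt (s := Set.Ici τ)
    rwa [hVal0 τ hτ.1] at this
  have hcont : ContinuousOn
      (fun u => En u + (∫ s in (0:ℝ)..u,
          ((k₀ + β) * (∫ x in (0:ℝ)..L, (pt w s x) ^ 2)
            + k₁ * ∫ x in (0:ℝ)..L, (px (pt w) s x) ^ 2))
        + β * U * (∫ s in (0:ℝ)..u, ∫ x in (0:ℝ)..L, px w s x * pt w s x))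
      (Set.Icc 0 t) := fun u _ => (hVal u).continuousAt.continuousWithinAt
  have hconst := constant_of_has_deriv_right_zero hcont hder0 t ⟨ht, le_rfl⟩
  simp only [intervalIntegral.integral_same] at hconst
  linarith [hconst]
end
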